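/- Let α be a positive integer, M ≥ 0, and f positive on primes with 0 ≤ 1/f(p) − α/p ≤ M/p² for all primes p. Then the series β_f = ∑_{p prime} (p·log p)/(p−1) · (1/f(p) − α/p) converges, is nonnegative, and satisfies β_f ≤ −2M·ζ'(2). -/
import Mathlib

open LSeries Complex

private lemma abs_lt_two : LSeries.abscissaOfAbsConv 1 < (2 : ℂ).re := by
  rw [LSeries.abscissaOfAbsConv_one]
  simp only [Complex.re_ofNat]
  exact_mod_cast one_lt_two

private lemma zeta_deriv_eq : deriv riemannZeta 2 = deriv (LSeries 1) 2 := by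
  refine (Filter.EventuallyEq.deriv_eq <| Filter.eventuallyEq_iff_exists_mem.mpr ?_).symm
  exact ⟨{z | 1 < z.re}, (isOpen_lt continuous_const continuous_re).mem_nhds (by norm_num),
    fun _ ↦ LSeries_one_eq_riemannZeta⟩

private lemma summable_logMul : LSeriesSummable (logMul 1) 2 :=
  LSeriesSummable_logMul_of_lt_re abs_lt_two

private lemma term_re (n : ℕ) : (term (logMul 1) 2 n).re = Real.log n / (n : ℝ) ^ 2 := by
  rcases eq_or_ne n 0 with rfl | hn
  · simp
  · rw [LSeries.term_of_ne_zero hn]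
    simp only [logMul, Pi.one_apply, mul_one]
    rw [Complex.cpow_ofNat, ← Complex.natCast_log]
    have : ((n : ℂ) : ℂ) ^ 2 = ((n : ℝ) ^ 2 : ℝ) := by push_cast; ring
    rw [this, ← Complex.ofReal_div, Complex.ofReal_re]

private lemma summable_g : Summable (fun n : ℕ => Real.log n / (n : ℝ) ^ 2) := by
  have := Complex.reCLM.summable summable_logMul
  simpa only [Complex.reCLM_apply, term_re] using this

private lemma neg_zeta_deriv_re :
    (-(deriv riemannZeta 2)).re = ∑' n : ℕ, Real.log n / (n : ℝ) ^ 2 := by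
  rw [zeta_deriv_eq, LSeries_deriv abs_lt_two, neg_neg, LSeries,
    Complex.re_tsum summable_logMul]
  exact tsum_congr term_re

/-- Under the linear-approximation hypothesis, the constant
`β_f = ∑_{p prime} (p log p)/(p−1) · (1/f(p) − α/p)` converges, is nonnegative,
and satisfies `β_f ≤ −2M ζ'(2)`. -/
theorem stmt_12 (α : ℕ) (hα : 0 < α) (M : ℝ) (hM : 0 ≤ M) (f : ℕ → ℝ)
    (hf : ∀ p : ℕ, p.Prime → 0 < f p)
    (happrox : ∀ p : ℕ, p.Prime →
      0 ≤ 1 / f p - (α : ℝ) / p ∧ 1 / f p - (α : ℝ) / p ≤ M / (p : ℝ) ^ 2) :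
    Summable (fun p : Nat.Primes =>
      ((p : ℕ) : ℝ) * Real.log (p : ℕ) / (((p : ℕ) : ℝ) - 1) *
        (1 / f (p : ℕ) - (α : ℝ) / (p : ℕ))) ∧
    0 ≤ (∑' p : Nat.Primes,
      ((p : ℕ) : ℝ) * Real.log (p : ℕ) / (((p : ℕ) : ℝ) - 1) *
        (1 / f (p : ℕ) - (α : ℝ) / (p : ℕ))) ∧
    (∑' p : Nat.Primes,
      ((p : ℕ) : ℝ) * Real.log (p : ℕ) / (((p : ℕ) : ℝ) - 1) *
        (1 / f (p : ℕ) - (α : ℝ) / (p : ℕ))) ≤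
      2 * M * (-(deriv riemannZeta 2)).re := by
  set g : ℕ → ℝ := fun n => Real.log n / (n : ℝ) ^ 2 with hg
  set F : Nat.Primes → ℝ := fun p =>
    ((p : ℕ) : ℝ) * Real.log (p : ℕ) / (((p : ℕ) : ℝ) - 1) *
      (1 / f (p : ℕ) - (α : ℝ) / (p : ℕ)) with hF
  have hFnonneg : ∀ p : Nat.Primes, 0 ≤ F p := by
    intro p
    have hp2 : (2 : ℝ) ≤ ((p : ℕ) : ℝ) := by exact_mod_cast p.2.two_le
    have hlog : 0 ≤ Real.log (p : ℕ) := Real.log_nonneg (by linarith)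
    refine mul_nonneg (div_nonneg (mul_nonneg (by linarith) hlog) (by linarith)) ?_
    exact (happrox _ p.2).1
  have hFle : ∀ p : Nat.Primes, F p ≤ 2 * M * g (p : ℕ) := by
    intro p
    have hp2 : (2 : ℝ) ≤ ((p : ℕ) : ℝ) := by exact_mod_cast p.2.two_le
    have hlog : 0 ≤ Real.log (p : ℕ) := Real.log_nonneg (by linarith)
    set q : ℝ := ((p : ℕ) : ℝ)
    have hq1 : (0 : ℝ) < q - 1 := by simp only [q]; linarith
    have hq0 : (0 : ℝ) < q := by linarith
    have hcoef : q * Real.log (p : ℕ) / (q - 1) ≤ 2 * Real.log (p : ℕ) := by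
      rw [div_le_iff₀ hq1]
      nlinarith
    have h2 := (happrox _ p.2).2
    calc F p ≤ q * Real.log (p : ℕ) / (q - 1) * (M / q ^ 2) := by
          refine mul_le_mul_of_nonneg_left h2 ?_
          exact div_nonneg (mul_nonneg (by linarith) hlog) hq1.le
      _ ≤ 2 * Real.log (p : ℕ) * (M / q ^ 2) := by
          refine mul_le_mul_of_nonneg_right hcoef ?_
          positivity
      _ = 2 * M * g (p : ℕ) := by
          simp only [hg, q]
          field_simp
  have hgsub : Summable (fun p : Nat.Primes => g (p : ℕ)) :=
    summable_g.subtype {p | p.Prime}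
  have hsum : Summable F := by
    refine Summable.of_nonneg_of_le hFnonneg hFle ?_
    exact hgsub.mul_left (2 * M)
  refine ⟨hsum, tsum_nonneg hFnonneg, ?_⟩
  have hgnonneg : ∀ n, 0 ≤ g n := by
    intro n
    rcases Nat.eq_zero_or_pos n with rfl | hn
    · simp [hg]
    · exact div_nonneg (Real.log_natCast_nonneg n) (by positivity)
  have step1 : (∑' p, F p) ≤ ∑' p : Nat.Primes, 2 * M * g (p : ℕ) :=
    Summable.tsum_le_tsum hFle hsum (hgsub.mul_left (2 * M))
  have step2 : (∑' p : Nat.Primes, g (p : ℕ)) ≤ ∑' n, g n := by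
    have := Summable.tsum_subtype_le g {p : ℕ | p.Prime} hgnonneg summable_g
    exact this
  rw [neg_zeta_deriv_re]
  calc (∑' p, F p) ≤ ∑' p : Nat.Primes, 2 * M * g (p : ℕ) := step1
    _ = 2 * M * ∑' p : Nat.Primes, g (p : ℕ) := tsum_mul_left
    _ ≤ 2 * M * ∑' n, g n := by
        refine mul_le_mul_of_nonneg_left step2 (by positivity)
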